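/- Let n ≥ 1 and let F be an upset of a De Morgan lattice L. Then F is a complete (respectively consistent) n-filter on L if and only if F is the intersection of a nonempty family of complete (respectively consistent) prime n-filters on L. -/

import Mathlib

/-- A De Morgan lattice: a distributive lattice with an antitone involution. -/
class DeMorgan (L : Type*) extends DistribLattice L where
  dneg : L → L
  dneg_dneg : ∀ x : L, dneg (dneg x) = x
  dneg_sup : ∀ x y : L, dneg (x ⊔ y) = dneg x ⊓ dneg y

prefix:max "∼" => DeMorgan.dneg

section Defs

variable {α : Type*}

/-- An upward closed subset of a lattice. -/
def IsUpset [Lattice α] (F : Set α) : Prop :=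
  ∀ ⦃x y : α⦄, x ∈ F → x ≤ y → y ∈ F

/-- A lattice filter: an upset closed under binary meets. -/
def IsLatFilter [Lattice α] (F : Set α) : Prop :=
  IsUpset F ∧ ∀ x y : α, x ∈ F → y ∈ F → x ⊓ y ∈ F

/-- An `n`-filter: an upset such that for every nonempty finite `Y`, if the meet of
every nonempty subset of `Y` of size at most `n` lies in `F`, then so does the meet of `Y`. -/
def IsNFilter [Lattice α] (n : ℕ) (F : Set α) : Prop :=
  IsUpset F ∧ ∀ (Y : Finset α) (hY : Y.Nonempty),
    (∀ (X : Finset α) (hX : X.Nonempty), X ⊆ Y → X.card ≤ n → X.inf' hX id ∈ F) →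
    Y.inf' hY id ∈ F

/-- A prime upset: `x ⊔ y ∈ F` implies `x ∈ F` or `y ∈ F`. -/
def IsPrimeUpset [Lattice α] (F : Set α) : Prop :=
  ∀ x y : α, x ⊔ y ∈ F → x ∈ F ∨ y ∈ F

/-- A downward closed subset of a lattice. -/
def IsDownset [Lattice α] (I : Set α) : Prop :=
  ∀ ⦃x y : α⦄, x ∈ I → y ≤ x → y ∈ I

/-- A lattice ideal: a downset closed under binary joins. -/
def IsIdeal [Lattice α] (I : Set α) : Prop :=
  IsDownset I ∧ ∀ x y : α, x ∈ I → y ∈ I → x ⊔ y ∈ I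

/-- An `n`-ideal: the order dual notion of an `n`-filter. -/
def IsNIdeal [Lattice α] (n : ℕ) (I : Set α) : Prop :=
  IsDownset I ∧ ∀ (Y : Finset α) (hY : Y.Nonempty),
    (∀ (X : Finset α) (hX : X.Nonempty), X ⊆ Y → X.card ≤ n → X.sup' hX id ∈ I) →
    Y.sup' hY id ∈ I

variable {L : Type*} [DeMorgan L]

/-- Almost complete upset: `x ∈ F` implies `x ⊓ (y ⊔ ∼y) ∈ F`. -/
def AlmostComplete (F : Set L) : Prop := ∀ x ∈ F, ∀ y : L, x ⊓ (y ⊔ ∼y) ∈ F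

/-- Complete upset: almost complete and nonempty. -/
def IsCompleteUpset (F : Set L) : Prop := AlmostComplete F ∧ F.Nonempty

/-- Almost consistent upset: `(x ⊓ ∼x) ⊔ y ∈ F` implies `y ∈ F`. -/
def AlmostConsistent (F : Set L) : Prop := ∀ x y : L, (x ⊓ ∼x) ⊔ y ∈ F → y ∈ F

/-- Consistent upset: almost consistent and not total. -/
def IsConsistentUpset (F : Set L) : Prop := AlmostConsistent F ∧ F ≠ Set.univ

/-- Classical upset: complete and consistent. -/
def IsClassicalUpset (F : Set L) : Prop := IsCompleteUpset F ∧ IsConsistentUpset F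

/-- Kalman upset. -/
def IsKalmanUpset (F : Set L) : Prop :=
  ∀ x y z u : L, ((x ⊓ ∼x) ⊓ z) ⊔ u ∈ F → ((y ⊔ ∼y) ⊓ z) ⊔ u ∈ F

/-- A homomorphism of De Morgan lattices. -/
def IsDMHom {L M : Type*} [DeMorgan L] [DeMorgan M] (h : L → M) : Prop :=
  (∀ x y : L, h (x ⊓ y) = h x ⊓ h y) ∧ (∀ x y : L, h (x ⊔ y) = h x ⊔ h y) ∧
    ∀ x : L, h (∼x) = ∼(h x)

/-- The filter generated by all elements of the form `x ⊔ ∼x`. -/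
def Fcomp (L : Type*) [DeMorgan L] : Set L :=
  {a | ∃ (s : Finset L) (hs : s.Nonempty), s.inf' hs (fun x => x ⊔ ∼x) ≤ a}

/-- The `n`-filter generated by a set. -/
def nFilterGen (n : ℕ) (U : Set L) : Set L :=
  ⋂₀ {F : Set L | IsNFilter n F ∧ U ⊆ F}

/-- `Comp U`. -/
def CompCl (U : Set L) : Set L := {x | ∃ a ∈ U, ∃ f ∈ Fcomp L, a ⊓ f ≤ x}

/-- `Cons U`. -/
def ConsCl (U : Set L) : Set L := {x | ∃ f ∈ Fcomp L, ∼f ⊔ x ∈ U}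

/-- A congruence of De Morgan lattices, as a binary relation. -/
def IsCongruence (θ : L → L → Prop) : Prop :=
  Equivalence θ ∧
  (∀ a b c d : L, θ a b → θ c d → θ (a ⊓ c) (b ⊓ d)) ∧
  (∀ a b c d : L, θ a b → θ c d → θ (a ⊔ c) (b ⊔ d)) ∧
  ∀ a b : L, θ a b → θ (∼a) (∼b)

end Defs

/-- The four-element De Morgan lattice `DM₁` on `Bool × Bool`. -/
instance : DeMorgan (Bool × Bool) :=
  { (inferInstance : DistribLattice (Bool × Bool)) with
    dneg := fun p => (!p.2, !p.1)
    dneg_dneg := by decide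
    dneg_sup := by decide }

/-- Powers of `DM₁`, with componentwise operations. -/
instance {ι : Type*} : DeMorgan (ι → Bool × Bool) :=
  { (inferInstance : DistribLattice (ι → Bool × Bool)) with
    dneg := fun f i => ∼(f i)
    dneg_dneg := fun f => funext fun i => DeMorgan.dneg_dneg (f i)
    dneg_sup := fun f g => funext fun i => DeMorgan.dneg_sup (f i) (g i) }

/-!
Each `a ∉ F` is separated from `F` by a prime `n`-filter: by Zorn, take an `n`-filter `G ⊇ F`
maximal among those avoiding `a` and keeping the property (almost completeness or almost
consistency). Both properties survive unions of chains and the passage from `G` to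
`{z | z ⊔ c ∈ G}`; if `x ⊔ y ∈ G` with `x, y ∉ G`, maximality applied to these sets gives first
`a ⊔ y ∈ G` and then `a ∈ G`. Conversely, every property involved is preserved by nonempty
intersections.
-/

universe u

section NFilter

variable {α : Type*} {n : ℕ}

theorem isNFilter_univ [Lattice α] : IsNFilter n (Set.univ : Set α) :=
  ⟨fun _ _ _ _ => trivial, fun _ _ _ => trivial⟩

theorem isNFilter_iInter [Lattice α] {ι : Sort*} {G : ι → Set α} (h : ∀ i, IsNFilter n (G i)) :
    IsNFilter n (⋂ i, G i) := by
  refine ⟨fun x y hx hxy => Set.mem_iInter.2 fun i => (h i).1 (Set.mem_iInter.1 hx i) hxy,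
    fun Y hY hsmall => Set.mem_iInter.2 fun i => (h i).2 Y hY fun X hX hXY hcard => ?_⟩
  exact Set.mem_iInter.1 (hsmall X hX hXY hcard) i

theorem isNFilter_sUnion_of_isChain [Lattice α] {S : Set (Set α)} (hS : S.Nonempty)
    (hchain : IsChain (· ⊆ ·) S) (h : ∀ T ∈ S, IsNFilter n T) : IsNFilter n (⋃₀ S) := by
  refine ⟨fun x y ⟨T, hT, hx⟩ hxy => ⟨T, hT, (h T hT).1 hx hxy⟩, fun Y hY hsmall => ?_⟩
  -- The meets of the small subsets of `Y` are finitely many, so one member of the chain has them all.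
  set M : Set α := ⋃ X ∈ Y.powerset, {a | ∃ hX : X.Nonempty, X.card ≤ n ∧ X.inf' hX id = a}
  have hM : M.Finite := Y.powerset.finite_toSet.biUnion fun X _ =>
    Set.Subsingleton.finite (by rintro _ ⟨_, _, rfl⟩ _ ⟨_, _, rfl⟩; rfl)
  have hMS : M ⊆ ⋃₀ S := Set.iUnion₂_subset fun X hXY => by
    rintro _ ⟨hX, hcard, rfl⟩
    exact hsmall X hX (Finset.mem_powerset.1 hXY) hcard
  obtain ⟨T, hT, hMT⟩ := hchain.directedOn.exists_mem_subset_of_finite_of_subset_sUnion hS hM hMS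
  refine ⟨T, hT, (h T hT).2 Y hY fun X hX hXY hcard => hMT ?_⟩
  exact Set.mem_biUnion (Finset.mem_coe.2 (Finset.mem_powerset.2 hXY)) ⟨hX, hcard, rfl⟩

theorem IsNFilter.sup_preimage [DistribLattice α] {G : Set α} (hG : IsNFilter n G) (c : α) :
    IsNFilter n {z | z ⊔ c ∈ G} := by
  classical
  refine ⟨fun x y hx hxy => hG.1 hx (sup_le_sup_right hxy c), fun Y hY hsmall => ?_⟩
  have inf'_sup : ∀ (X : Finset α) (hX : X.Nonempty),
      X.inf' hX id ⊔ c = (X.image (· ⊔ c)).inf' (hX.image _) id := by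
    intro X hX
    rw [Finset.inf'_image, Finset.inf'_sup_distrib_right]
    rfl
  show Y.inf' hY id ⊔ c ∈ G
  rw [inf'_sup]
  refine hG.2 _ _ fun X' hX' hX'Y hcard => ?_
  obtain ⟨X, hXY, hinj, rfl⟩ := Finset.exists_subset_injOn_image_eq_of_surjOn (f := (· ⊔ c))
    (Y : Set α) X' (by rw [Set.SurjOn, ← Finset.coe_image]; exact_mod_cast hX'Y)
  have : X.inf' hX'.of_image id ⊔ c ∈ G :=
    hsmall X hX'.of_image hXY (by rwa [Finset.card_image_of_injOn hinj] at hcard)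
  rwa [inf'_sup] at this

end NFilter

section PrimeExtension

variable {α : Type*} [DistribLattice α] {n : ℕ} {Q : Set α → Prop}

theorem exists_prime_nFilter_of_notMem
    (hQ_sUnion : ∀ S : Set (Set α), S.Nonempty → IsChain (· ⊆ ·) S → (∀ T ∈ S, Q T) → Q (⋃₀ S))
    (hQ_sup : ∀ G : Set α, IsUpset G → Q G → ∀ c, Q {z | z ⊔ c ∈ G})
    {F : Set α} (hF : IsNFilter n F) (hQF : Q F) {a : α} (ha : a ∉ F) :
    ∃ G : Set α, IsNFilter n G ∧ Q G ∧ IsPrimeUpset G ∧ F ⊆ G ∧ a ∉ G := by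
  set P : Set (Set α) := {T | IsNFilter n T ∧ Q T ∧ a ∉ T}
  have hchain : ∀ C ⊆ P, IsChain (· ⊆ ·) C → C.Nonempty → ∃ ub ∈ P, ∀ T ∈ C, T ⊆ ub :=
    fun C hCP hC hCne => ⟨⋃₀ C, ⟨isNFilter_sUnion_of_isChain hCne hC fun T hT => (hCP hT).1,
      hQ_sUnion C hCne hC fun T hT => (hCP hT).2.1, fun ⟨T, hT, haT⟩ => (hCP hT).2.2 haT⟩,
      fun _ => Set.subset_sUnion_of_mem⟩
  obtain ⟨G, hFG, hGmax⟩ := zorn_subset_nonempty P hchain F ⟨hF, hQF, ha⟩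
  obtain ⟨hGn, hGQ, haG⟩ := hGmax.prop
  -- `{z | z ⊔ c ∈ G}` extends `G` by `x`, so by maximality it must contain `a`.
  have sup_mem : ∀ x c, x ∉ G → x ⊔ c ∈ G → a ⊔ c ∈ G := by
    intro x c hx hxc
    by_contra hac
    have hGc : G ⊆ {z | z ⊔ c ∈ G} := fun z hz => hGn.1 hz le_sup_left
    exact hx (hGmax.2 ⟨hGn.sup_preimage c, hQ_sup G hGn.1 hGQ c, hac⟩ hGc hxc)
  refine ⟨G, hGn, hGQ, fun x y hxy => ?_, hFG, haG⟩
  by_contra! hxy'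
  have hay : a ⊔ y ∈ G := sup_mem x y hxy'.1 hxy
  exact haG (by simpa using sup_mem y a hxy'.2 (by rwa [sup_comm]))

theorem exists_prime_nFilters_iInter_eq
    (hQ_sUnion : ∀ S : Set (Set α), S.Nonempty → IsChain (· ⊆ ·) S → (∀ T ∈ S, Q T) → Q (⋃₀ S))
    (hQ_sup : ∀ G : Set α, IsUpset G → Q G → ∀ c, Q {z | z ⊔ c ∈ G})
    {F : Set α} (hF : IsNFilter n F) (hQF : Q F) :
    ∃ G : ↥Fᶜ → Set α, (∀ i, IsNFilter n (G i) ∧ Q (G i) ∧ IsPrimeUpset (G i) ∧ (i : α) ∉ G i) ∧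
      F = ⋂ i, G i := by
  choose G hGn hGQ hGp hFG haG using
    fun i : ↥Fᶜ => exists_prime_nFilter_of_notMem hQ_sUnion hQ_sup hF hQF i.2
  refine ⟨G, fun i => ⟨hGn i, hGQ i, hGp i, haG i⟩,
    Set.Subset.antisymm (Set.subset_iInter hFG) fun z hz => ?_⟩
  by_contra hzF
  exact haG ⟨z, hzF⟩ (Set.mem_iInter.1 hz ⟨z, hzF⟩)

end PrimeExtension

section DeMorgan

variable {L : Type*} [DeMorgan L] {ι : Sort*} {G : ι → Set L}

theorem AlmostComplete.iInter (h : ∀ i, AlmostComplete (G i)) : AlmostComplete (⋂ i, G i) :=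
  fun x hx y => Set.mem_iInter.2 fun i => h i x (Set.mem_iInter.1 hx i) y

theorem AlmostComplete.sUnion {S : Set (Set L)} (h : ∀ T ∈ S, AlmostComplete T) :
    AlmostComplete (⋃₀ S) :=
  fun x ⟨T, hT, hx⟩ y => ⟨T, hT, h T hT x hx y⟩

theorem AlmostComplete.sup_preimage {G : Set L} (hG : IsUpset G) (h : AlmostComplete G) (c : L) :
    AlmostComplete {z | z ⊔ c ∈ G} := fun z hz y =>
  hG (h _ hz y) (by rw [inf_sup_right]; exact sup_le_sup_left inf_le_left _)

theorem AlmostComplete.sup_dneg_mem {G : Set L} (hG : IsUpset G) (h : AlmostComplete G)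
    {x : L} (hx : x ∈ G) (y : L) : y ⊔ ∼y ∈ G :=
  hG (h x hx y) inf_le_right

theorem AlmostConsistent.iInter (h : ∀ i, AlmostConsistent (G i)) :
    AlmostConsistent (⋂ i, G i) :=
  fun x y hxy => Set.mem_iInter.2 fun i => h i x y (Set.mem_iInter.1 hxy i)

theorem AlmostConsistent.sUnion {S : Set (Set L)} (h : ∀ T ∈ S, AlmostConsistent T) :
    AlmostConsistent (⋃₀ S) :=
  fun x y ⟨T, hT, hxy⟩ => ⟨T, hT, h T hT x y hxy⟩

theorem AlmostConsistent.sup_preimage {G : Set L} (h : AlmostConsistent G) (c : L) :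
    AlmostConsistent {z | z ⊔ c ∈ G} :=
  fun x z hxz => h x (z ⊔ c) (by rwa [← sup_assoc])

theorem isCompleteUpset_iInter [Nonempty ι] (hG : ∀ i, IsUpset (G i))
    (h : ∀ i, IsCompleteUpset (G i)) : IsCompleteUpset (⋂ i, G i) := by
  obtain ⟨i⟩ := ‹Nonempty ι›
  obtain ⟨x, -⟩ := (h i).2
  refine ⟨AlmostComplete.iInter fun i => (h i).1, x ⊔ ∼x, Set.mem_iInter.2 fun j => ?_⟩
  obtain ⟨w, hw⟩ := (h j).2
  exact (h j).1.sup_dneg_mem (hG j) hw x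

theorem isConsistentUpset_iInter [Nonempty ι] (h : ∀ i, IsConsistentUpset (G i)) :
    IsConsistentUpset (⋂ i, G i) := by
  obtain ⟨i⟩ := ‹Nonempty ι›
  refine ⟨AlmostConsistent.iInter fun i => (h i).1, fun huniv => (h i).2 ?_⟩
  exact Set.eq_univ_of_univ_subset (huniv ▸ Set.iInter_subset G i)

end DeMorgan

theorem isCompleteUpset_and_isNFilter_iff {L : Type u} [DeMorgan L] {n : ℕ} {F : Set L} :
    (IsCompleteUpset F ∧ IsNFilter n F) ↔
      ∃ (ι : Type u) (_ : Nonempty ι) (G : ι → Set L),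
        (∀ i : ι, IsCompleteUpset (G i) ∧ IsPrimeUpset (G i) ∧ IsNFilter n (G i)) ∧
        F = ⋂ i : ι, G i := by
  constructor
  · rintro ⟨⟨hFac, hFne⟩, hFn⟩
    by_cases hFu : F = Set.univ
    · subst hFu
      exact ⟨PUnit, inferInstance, fun _ => Set.univ, fun _ =>
        ⟨⟨hFac, hFne⟩, fun _ _ _ => Or.inl trivial, isNFilter_univ⟩, Set.iInter_const _ |>.symm⟩
    obtain ⟨G, hG, hFG⟩ := exists_prime_nFilters_iInter_eq (fun _ _ _ => AlmostComplete.sUnion)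
      (fun _ => AlmostComplete.sup_preimage) hFn hFac
    refine ⟨_, (Set.nonempty_compl.2 hFu).to_subtype, G, fun i => ?_, hFG⟩
    exact ⟨⟨(hG i).2.1, hFne.mono (hFG ▸ Set.iInter_subset G i)⟩, (hG i).2.2.1, (hG i).1⟩
  · rintro ⟨ι, hι, G, hG, rfl⟩
    exact ⟨isCompleteUpset_iInter (fun i => (hG i).2.2.1) fun i => (hG i).1,
      isNFilter_iInter fun i => (hG i).2.2⟩

theorem isConsistentUpset_and_isNFilter_iff {L : Type u} [DeMorgan L] {n : ℕ} {F : Set L} :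
    (IsConsistentUpset F ∧ IsNFilter n F) ↔
      ∃ (ι : Type u) (_ : Nonempty ι) (G : ι → Set L),
        (∀ i : ι, IsConsistentUpset (G i) ∧ IsPrimeUpset (G i) ∧ IsNFilter n (G i)) ∧
        F = ⋂ i : ι, G i := by
  constructor
  · rintro ⟨⟨hFac, hFu⟩, hFn⟩
    obtain ⟨G, hG, hFG⟩ := exists_prime_nFilters_iInter_eq (fun _ _ _ => AlmostConsistent.sUnion)
      (fun _ _ => AlmostConsistent.sup_preimage) hFn hFac
    refine ⟨_, (Set.nonempty_compl.2 hFu).to_subtype, G, fun i => ?_, hFG⟩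
    exact ⟨⟨(hG i).2.1, fun hGu => (hG i).2.2.2 (hGu ▸ Set.mem_univ _)⟩, (hG i).2.2.1, (hG i).1⟩
  · rintro ⟨ι, hι, G, hG, rfl⟩
    exact ⟨isConsistentUpset_iInter fun i => (hG i).1, isNFilter_iInter fun i => (hG i).2.2⟩

theorem statement18_general {L : Type u} [DeMorgan L] (n : ℕ)
    (F : Set L) :
    ((IsCompleteUpset F ∧ IsNFilter n F) ↔
      ∃ (ι : Type u) (_ : Nonempty ι) (G : ι → Set L),
        (∀ i : ι, IsCompleteUpset (G i) ∧ IsPrimeUpset (G i) ∧ IsNFilter n (G i)) ∧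
        F = ⋂ i : ι, G i) ∧
    ((IsConsistentUpset F ∧ IsNFilter n F) ↔
      ∃ (ι : Type u) (_ : Nonempty ι) (G : ι → Set L),
        (∀ i : ι, IsConsistentUpset (G i) ∧ IsPrimeUpset (G i) ∧ IsNFilter n (G i)) ∧
        F = ⋂ i : ι, G i) :=
  ⟨isCompleteUpset_and_isNFilter_iff, isConsistentUpset_and_isNFilter_iff⟩

/-- complete (resp. consistent) `n`-filters on a De Morgan lattice are
precisely the intersections of nonempty families of complete (resp. consistent) prime
`n`-filters. -/
theorem statement18 {L : Type u} [DeMorgan L] [Nonempty L] (n : ℕ) (hn : 1 ≤ n)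
    (F : Set L) (hF : IsUpset F) :
    ((IsCompleteUpset F ∧ IsNFilter n F) ↔
      ∃ (ι : Type u) (_ : Nonempty ι) (G : ι → Set L),
        (∀ i : ι, IsCompleteUpset (G i) ∧ IsPrimeUpset (G i) ∧ IsNFilter n (G i)) ∧
        F = ⋂ i : ι, G i) ∧
    ((IsConsistentUpset F ∧ IsNFilter n F) ↔
      ∃ (ι : Type u) (_ : Nonempty ι) (G : ι → Set L),
        (∀ i : ι, IsConsistentUpset (G i) ∧ IsPrimeUpset (G i) ∧ IsNFilter n (G i)) ∧
        F = ⋂ i : ι, G i) :=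
  statement18_general n F
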